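/- Let M > 0 and L > 4M. Define r_±(ρ,z) = √(ρ² + (z ∓ M)²), u₀(ρ,z) = ln( (r₊ + r₋ − 2M)/(r₊ + r₋ + 2M) ), u_PS^{±}(ρ,z) = u₀(ρ, z ± L/4) + Σ_{n=1}^{∞}[ u₀(ρ, z − nL ± L/4) + u₀(ρ, z + nL ± L/4) + 4M/(nL) ], and u_PS = u_PS^{−} + u_PS^{+}. Then the double periodic Schwarzschild potential u_PS satisfies u_PS(ρ,z) = (8M/L) ln ρ + O(1) as ρ → ∞: there exist constants C > 0 and ρ₀ > 0 such that |u_PS(ρ,z) − (8M/L) ln ρ| ≤ C for all ρ ≥ ρ₀ and all z ∈ ℝ. -/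

import Mathlib

/-- r₊ = √(ρ² + (z − M)²). -/
noncomputable def rPlus (M ρ z : ℝ) : ℝ := Real.sqrt (ρ ^ 2 + (z - M) ^ 2)

/-- r₋ = √(ρ² + (z + M)²). -/
noncomputable def rMinus (M ρ z : ℝ) : ℝ := Real.sqrt (ρ ^ 2 + (z + M) ^ 2)

/-- The Schwarzschild solution of mass M centered at the origin, in Weyl
coordinates: u₀ = ln((r₊ + r₋ − 2M)/(r₊ + r₋ + 2M)). -/
noncomputable def uSchw (M ρ z : ℝ) : ℝ :=
  Real.log ((rPlus M ρ z + rMinus M ρ z - 2 * M) / (rPlus M ρ z + rMinus M ρ z + 2 * M))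

/-- The periodic Schwarzschild potential with period L, centered at z = −s·(L/4)
shifted by s·L/4, i.e. u_PS^{s}(ρ,z) = u₀(ρ, z + sL/4) + Σ_{n≥1}[u₀(ρ, z − nL + sL/4)
+ u₀(ρ, z + nL + sL/4) + 4M/(nL)], where s = ±1. -/
noncomputable def uPSsigned (M L s ρ z : ℝ) : ℝ :=
  uSchw M ρ (z + s * L / 4)
    + ∑' n : ℕ,
        (uSchw M ρ (z - (n + 1) * L + s * L / 4)
          + uSchw M ρ (z + (n + 1) * L + s * L / 4)
          + 4 * M / ((n + 1) * L))

/-- The double periodic Schwarzschild potential u_PS = u_PS^− + u_PS^+. -/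
noncomputable def uPSdouble (M L ρ z : ℝ) : ℝ :=
  uPSsigned M L (-1) ρ z + uPSsigned M L 1 ρ z

/-!
Far from the rod, `u₀(ρ, x) = -2M / √(ρ² + x²) + O(M² / (ρ² + x²))`, so the constant `4M / (nL)`
cancels the far field of the `n`-th pair of images up to `O(n⁻²)`: the series converges, and
`u_PS^±` is `L`-periodic in `z`, because shifting `z` by `L` changes the partial sums by a
telescoping sum of values of `u₀` that tend to `0`. For `z` in one period, moving the far
fields of the images at `z ± nL` to the lattice points `± nL` costs a telescoping `O(M / ρ)`,
and the far-field errors add up to `O(M² / L²)`. What remains is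
`(4M / L) ∑ₘ (1/m - 1/√((ρ/L)² + m²))`, in which the images closer than `ρ` contribute a harmonic
sum up to `ρ / L` and the farther ones `O(1)`; hence each of `u_PS^±` is `(4M / L) log ρ + O(1)`.
-/

open Real Filter Topology

section Schwarzschild

variable {M ρ x : ℝ}

lemma two_sqrt_le_rPlus_add_rMinus (M ρ x : ℝ) :
    2 * √(ρ ^ 2 + x ^ 2) ≤ rPlus M ρ x + rMinus M ρ x := by
  have hprod : |ρ ^ 2 + x ^ 2 - M ^ 2| ≤ rPlus M ρ x * rMinus M ρ x := by
    rw [rPlus, rMinus, ← sqrt_mul (by positivity)]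
    exact abs_le_sqrt (by nlinarith [sq_nonneg (ρ * M)])
  have hP := sq_sqrt (show 0 ≤ ρ ^ 2 + (x - M) ^ 2 by positivity)
  have hQ := sq_sqrt (show 0 ≤ ρ ^ 2 + (x + M) ^ 2 by positivity)
  have hR := sq_sqrt (show 0 ≤ ρ ^ 2 + x ^ 2 by positivity)
  rw [rPlus, rMinus] at hprod ⊢
  nlinarith [le_abs_self (ρ ^ 2 + x ^ 2 - M ^ 2), sqrt_nonneg (ρ ^ 2 + x ^ 2),
    sqrt_nonneg (ρ ^ 2 + (x - M) ^ 2), sqrt_nonneg (ρ ^ 2 + (x + M) ^ 2)]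

lemma rPlus_add_rMinus_le (hM : 0 ≤ M) :
    rPlus M ρ x + rMinus M ρ x ≤ 2 * √(ρ ^ 2 + x ^ 2) + 2 * M := by
  have hx : |x| ≤ √(ρ ^ 2 + x ^ 2) := abs_le_sqrt (by nlinarith)
  have hR := sq_sqrt (show 0 ≤ ρ ^ 2 + x ^ 2 by positivity)
  have hplus : rPlus M ρ x ≤ √(ρ ^ 2 + x ^ 2) + M :=
    (sqrt_le_left (by positivity)).2 (by nlinarith [neg_abs_le x])
  have hminus : rMinus M ρ x ≤ √(ρ ^ 2 + x ^ 2) + M :=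
    (sqrt_le_left (by positivity)).2 (by nlinarith [le_abs_self x])
  linarith

lemma uSchw_neg (M ρ x : ℝ) : uSchw M ρ (-x) = uSchw M ρ x := by
  simp only [uSchw, rPlus, rMinus]
  rw [show (-x - M) ^ 2 = (x + M) ^ 2 by ring, show (-x + M) ^ 2 = (x - M) ^ 2 by ring,
    add_comm √(ρ ^ 2 + (x + M) ^ 2)]

lemma uSchw_mem_Icc (hM : 0 < M) (hρ : M < ρ) :
    uSchw M ρ x ∈ Set.Icc (-(2 * M / (√(ρ ^ 2 + x ^ 2) - M)))
      (-(2 * M / (√(ρ ^ 2 + x ^ 2) + 2 * M))) := by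
  set R := √(ρ ^ 2 + x ^ 2)
  set S := rPlus M ρ x + rMinus M ρ x
  have hρR : ρ ≤ R := le_sqrt_of_sq_le (by nlinarith)
  have hS₁ : 2 * R ≤ S := two_sqrt_le_rPlus_add_rMinus M ρ x
  have hS₂ : S ≤ 2 * R + 2 * M := rPlus_add_rMinus_le hM.le
  have hpos : 0 < (S - 2 * M) / (S + 2 * M) := div_pos (by linarith) (by linarith)
  have hlog₁ := one_sub_inv_le_log_of_pos hpos
  have hlog₂ := log_le_sub_one_of_pos hpos
  rw [inv_div, show 1 - (S + 2 * M) / (S - 2 * M) = -(4 * M / (S - 2 * M)) by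
    field_simp [show S - 2 * M ≠ 0 by linarith]; ring] at hlog₁
  rw [show (S - 2 * M) / (S + 2 * M) - 1 = -(4 * M / (S + 2 * M)) by
    field_simp [show S + 2 * M ≠ 0 by linarith]; ring] at hlog₂
  refine ⟨le_trans ?_ hlog₁, hlog₂.trans ?_⟩
  · rw [neg_le_neg_iff, div_le_div_iff₀ (by linarith) (by linarith)]
    nlinarith
  · rw [neg_le_neg_iff, div_le_div_iff₀ (by linarith) (by linarith)]
    nlinarith

end Schwarzschild

/-- `-monopole M` is the far field of `uSchw M`: `uSchw M = 2 U` with `U` the Newtonian potential of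
a rod of mass `M`, which is `-M / √(ρ² + x²)` at large distance. -/
noncomputable def monopole (M ρ x : ℝ) : ℝ := 2 * M / √(ρ ^ 2 + x ^ 2)

section FarField

variable {M ρ x : ℝ}

lemma abs_uSchw_add_monopole_le (hM : 0 < M) (hρ : 2 * M ≤ ρ) (x : ℝ) :
    |uSchw M ρ x + monopole M ρ x| ≤ 4 * M ^ 2 / (ρ ^ 2 + x ^ 2) := by
  obtain ⟨hlo, hhi⟩ := uSchw_mem_Icc (x := x) hM (by linarith)
  set R := √(ρ ^ 2 + x ^ 2) with hRdef
  have hR : R ^ 2 = ρ ^ 2 + x ^ 2 := sq_sqrt (by positivity)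
  have hρR : ρ ≤ R := le_sqrt_of_sq_le (by nlinarith)
  have hR0 : 0 < R := by linarith
  rw [monopole, ← hRdef, ← hR, abs_le]
  constructor
  · have : 2 * M / (R - M) - 2 * M / R ≤ 4 * M ^ 2 / R ^ 2 := by
      rw [div_sub_div _ _ (by linarith) hR0.ne', div_le_div_iff₀ (by nlinarith) (by positivity)]
      nlinarith [mul_pos hM hM, mul_pos (mul_pos hM hM) hR0]
    linarith
  · have : 2 * M / R - 2 * M / (R + 2 * M) ≤ 4 * M ^ 2 / R ^ 2 := by
      rw [div_sub_div _ _ hR0.ne' (by linarith), div_le_div_iff₀ (by nlinarith) (by positivity)]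
      nlinarith [mul_pos hM hM, mul_pos (mul_pos hM hM) hR0]
    linarith

lemma abs_uSchw_le (hM : 0 < M) (hρ : 2 * M ≤ ρ) (x : ℝ) :
    |uSchw M ρ x| ≤ 2 * monopole M ρ x := by
  set R := √(ρ ^ 2 + x ^ 2) with hRdef
  have hR : R ^ 2 = ρ ^ 2 + x ^ 2 := sq_sqrt (by positivity)
  have hρR : ρ ≤ R := le_sqrt_of_sq_le (by nlinarith)
  have hfar := abs_uSchw_add_monopole_le hM hρ x
  have hmono : 0 ≤ monopole M ρ x := by unfold monopole; positivity
  have hsmall : 4 * M ^ 2 / (ρ ^ 2 + x ^ 2) ≤ monopole M ρ x := by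
    rw [monopole, ← hRdef, ← hR, div_le_div_iff₀ (by nlinarith) (by linarith)]
    nlinarith [mul_nonneg (mul_pos hM (show 0 < R by linarith)).le (show 0 ≤ R - 2 * M by linarith)]
  calc |uSchw M ρ x| = |(uSchw M ρ x + monopole M ρ x) - monopole M ρ x| := by
        rw [add_sub_cancel_right]
    _ ≤ |uSchw M ρ x + monopole M ρ x| + |monopole M ρ x| := abs_sub _ _
    _ ≤ 2 * monopole M ρ x := by rw [abs_of_nonneg hmono]; linarith

lemma tendsto_uSchw_atTop (hM : 0 < M) (hρ : 2 * M ≤ ρ) : Tendsto (uSchw M ρ) atTop (𝓝 0) := by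
  have hdecay : Tendsto (fun x : ℝ => 4 * M / x) atTop (𝓝 0) :=
    tendsto_const_nhds.div_atTop tendsto_id
  refine squeeze_zero_norm' ?_ hdecay
  filter_upwards [eventually_gt_atTop 0] with x hx
  have hx' : x ≤ √(ρ ^ 2 + x ^ 2) := le_sqrt_of_sq_le (by nlinarith)
  calc ‖uSchw M ρ x‖ ≤ 2 * monopole M ρ x := abs_uSchw_le hM hρ x
    _ = 4 * M / √(ρ ^ 2 + x ^ 2) := by rw [monopole]; ring
    _ ≤ 4 * M / x := div_le_div_of_nonneg_left (by linarith) hx hx'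

lemma abs_uSchw_add_div_le (hM : 0 < M) (hρ : 2 * M ≤ ρ) {t v : ℝ} (ht : 0 < t)
    (hv : 2 * |v| ≤ t) :
    |uSchw M ρ (t + v) + 2 * M / t| ≤ (16 * M ^ 2 + 4 * M * (ρ + |v|)) / t ^ 2 := by
  set R := √(ρ ^ 2 + (t + v) ^ 2) with hRdef
  have hR : R ^ 2 = ρ ^ 2 + (t + v) ^ 2 := sq_sqrt (by positivity)
  have htv : t / 2 ≤ t + v := by linarith [neg_abs_le v]
  have hRlo : t + v ≤ R := le_sqrt_of_sq_le (by nlinarith)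
  have hRhi : R ≤ ρ + (t + v) := (sqrt_le_left (by linarith)).2 (by nlinarith)
  have hfar : |uSchw M ρ (t + v) + monopole M ρ (t + v)| ≤ 16 * M ^ 2 / t ^ 2 := by
    refine (abs_uSchw_add_monopole_le hM hρ _).trans ?_
    have : t ^ 2 / 4 ≤ (t + v) ^ 2 := by nlinarith
    rw [div_le_div_iff₀ (by nlinarith) (by positivity)]
    nlinarith [mul_pos hM hM, sq_nonneg ρ]
  have hcounter : |2 * M / t - monopole M ρ (t + v)| ≤ 4 * M * (ρ + |v|) / t ^ 2 := by
    have hdiff : |R - t| ≤ ρ + |v| :=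
      abs_le.2 ⟨by linarith [neg_abs_le v], by linarith [le_abs_self v]⟩
    rw [monopole, ← hRdef, div_sub_div _ _ ht.ne' (by linarith), abs_div,
      abs_of_pos (by nlinarith : 0 < t * R), show 2 * M * R - t * (2 * M) = 2 * M * (R - t) by ring,
      abs_mul, abs_of_pos (by linarith : 0 < 2 * M)]
    calc 2 * M * |R - t| / (t * R) ≤ 2 * M * (ρ + |v|) / (t * (t / 2)) :=
          div_le_div₀ (mul_nonneg (by linarith) (by linarith [abs_nonneg v])) (by gcongr)
            (by positivity) (by gcongr; linarith)
      _ = 4 * M * (ρ + |v|) / t ^ 2 := by field_simp; ring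
  calc |uSchw M ρ (t + v) + 2 * M / t|
      = |(uSchw M ρ (t + v) + monopole M ρ (t + v)) + (2 * M / t - monopole M ρ (t + v))| := by
        congr 1; ring
    _ ≤ 16 * M ^ 2 / t ^ 2 + 4 * M * (ρ + |v|) / t ^ 2 :=
        (abs_add_le _ _).trans (add_le_add hfar hcounter)
    _ = _ := by ring

end FarField

lemma hasSum_one_div_add_one_sq : HasSum (fun n : ℕ => 1 / ((n : ℝ) + 1) ^ 2) (π ^ 2 / 6) := by
  simpa using (hasSum_nat_add_iff' 1).2 hasSum_zeta_two

/-- The `n`-th pair of images in the periodic Schwarzschild potential (Myers, Korotkin–Nicolai),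
with the constant `4 M / ((n + 1) L)` that makes the series converge. -/
noncomputable def periodicSchwTerm (M L ρ w : ℝ) (n : ℕ) : ℝ :=
  uSchw M ρ (w - (n + 1) * L) + uSchw M ρ (w + (n + 1) * L) + 4 * M / ((n + 1) * L)

noncomputable def periodicSchw (M L ρ w : ℝ) : ℝ :=
  uSchw M ρ w + ∑' n : ℕ, periodicSchwTerm M L ρ w n

lemma uPSsigned_eq_periodicSchw (M L s ρ z : ℝ) :
    uPSsigned M L s ρ z = periodicSchw M L ρ (z + s * L / 4) := by
  simp only [uPSsigned, periodicSchw, periodicSchwTerm]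
  congr 1
  refine tsum_congr fun n => ?_
  ring_nf

section Periodic

variable {M L ρ : ℝ}

lemma abs_periodicSchwTerm_le (hM : 0 < M) (hL : 0 < L) (hρ : 2 * M ≤ ρ) {w : ℝ} {n : ℕ}
    (hn : 2 * |w| ≤ (n + 1) * L) :
    |periodicSchwTerm M L ρ w n| ≤ 2 * (16 * M ^ 2 + 4 * M * (ρ + |w|)) / ((n + 1) * L) ^ 2 := by
  have ht : 0 < ((n : ℝ) + 1) * L := by positivity
  have hleft := abs_uSchw_add_div_le hM hρ ht (v := -w) (by rwa [abs_neg])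
  have hright := abs_uSchw_add_div_le hM hρ ht hn
  rw [abs_neg] at hleft
  have hreflect : uSchw M ρ (w - (n + 1) * L) = uSchw M ρ ((n + 1) * L + -w) := by
    rw [← uSchw_neg]; congr 1; ring
  calc |periodicSchwTerm M L ρ w n|
      = |(uSchw M ρ ((n + 1) * L + -w) + 2 * M / ((n + 1) * L))
          + (uSchw M ρ ((n + 1) * L + w) + 2 * M / ((n + 1) * L))| := by
        rw [periodicSchwTerm, hreflect]; ring_nf
    _ ≤ _ := (abs_add_le _ _).trans ((add_le_add hleft hright).trans_eq (by ring))

lemma summable_periodicSchwTerm (hM : 0 < M) (hL : 0 < L) (hρ : 2 * M ≤ ρ) (w : ℝ) :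
    Summable (periodicSchwTerm M L ρ w) := by
  have hfar : ∀ᶠ n : ℕ in atTop, 2 * |w| ≤ ((n : ℝ) + 1) * L :=
    ((tendsto_atTop_add_const_right _ 1 tendsto_natCast_atTop_atTop).atTop_mul_const
      hL).eventually_ge_atTop _
  refine (hasSum_one_div_add_one_sq.summable.mul_left
    (2 * (16 * M ^ 2 + 4 * M * (ρ + |w|)) / L ^ 2)).of_norm_bounded_eventually_nat ?_
  filter_upwards [hfar] with n hn
  refine (abs_periodicSchwTerm_le hM hL hρ hn).trans_eq ?_
  field_simp

lemma tsum_eq_add_of_telescoping {a b F : ℕ → ℝ} (ha : Summable a) (hb : Summable b)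
    (hF : Tendsto F atTop (𝓝 0)) (h : ∀ n, b n = a n + (F n - F (n + 1))) :
    ∑' n, b n = ∑' n, a n + F 0 := by
  have hpartial : ∀ N, ∑ n ∈ Finset.range N, b n = ∑ n ∈ Finset.range N, a n + (F 0 - F N) := by
    intro N
    simp only [h, Finset.sum_add_distrib, Finset.sum_range_sub']
  refine tendsto_nhds_unique hb.hasSum.tendsto_sum_nat ?_
  simpa [hpartial] using ha.hasSum.tendsto_sum_nat.add (tendsto_const_nhds.sub hF)

lemma periodic_periodicSchw (hM : 0 < M) (hL : 0 < L) (hρ : 2 * M ≤ ρ) :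
    Function.Periodic (periodicSchw M L ρ) L := by
  intro w
  have hlin : ∀ c, Tendsto (fun n : ℕ => (n : ℝ) * L + c) atTop atTop := fun c =>
    tendsto_atTop_add_const_right _ c (tendsto_natCast_atTop_atTop.atTop_mul_const hL)
  set F : ℕ → ℝ := fun n => uSchw M ρ (w - n * L) - uSchw M ρ (w + (n + 1) * L)
  have hF : Tendsto F atTop (𝓝 0) := by
    have hleft : Tendsto (fun n : ℕ => uSchw M ρ (w - n * L)) atTop (𝓝 0) := by
      simp_rw [← uSchw_neg M ρ (w - _), neg_sub, sub_eq_add_neg]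
      exact (tendsto_uSchw_atTop hM hρ).comp (hlin _)
    have hright : Tendsto (fun n : ℕ => uSchw M ρ (w + (n + 1) * L)) atTop (𝓝 0) := by
      simp_rw [show ∀ n : ℝ, w + (n + 1) * L = n * L + (w + L) from fun n => by ring]
      exact (tendsto_uSchw_atTop hM hρ).comp (hlin _)
    simpa using hleft.sub hright
  have hshift := tsum_eq_add_of_telescoping (summable_periodicSchwTerm hM hL hρ w)
    (summable_periodicSchwTerm hM hL hρ (w + L)) hF fun n => by
      simp only [periodicSchwTerm, F]; push_cast; ring_nf
  simp only [periodicSchw, hshift, F]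
  simp only [CharP.cast_eq_zero, zero_mul, sub_zero, zero_add, one_mul]
  ring

end Periodic

section Harmonic

variable {a m : ℝ}

lemma one_div_sub_one_div_sqrt_nonneg (hm : 0 < m) : 0 ≤ 1 / m - 1 / √(a ^ 2 + m ^ 2) := by
  have : m ≤ √(a ^ 2 + m ^ 2) := le_sqrt_of_sq_le (by nlinarith)
  rw [sub_nonneg]
  exact one_div_le_one_div_of_le hm this

lemma one_div_sub_one_div_sqrt_le (hm : 0 < m) :
    1 / m - 1 / √(a ^ 2 + m ^ 2) ≤ a ^ 2 / (2 * m ^ 3) := by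
  set R := √(a ^ 2 + m ^ 2)
  have hR : R ^ 2 = a ^ 2 + m ^ 2 := sq_sqrt (by positivity)
  have hmR : m ≤ R := le_sqrt_of_sq_le (by nlinarith)
  rw [div_sub_div _ _ hm.ne' (by linarith), div_le_div_iff₀ (by nlinarith) (by positivity)]
  nlinarith [mul_nonneg (sq_nonneg (R - m)) (show 0 ≤ R + 2 * m by linarith), sq_nonneg m]

/-- The terms are about `1 / m` up to `m ≈ a`, and `O(a² / m³)` beyond. -/
lemma abs_sum_range_one_div_sub_one_div_sqrt_sub_log_le (ha : 1 ≤ a) (k : ℕ) :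
    |∑ n ∈ Finset.range (⌊a⌋₊ + k), (1 / ((n : ℝ) + 1) - 1 / √(a ^ 2 + ((n : ℝ) + 1) ^ 2))
      - log a| ≤ 2 := by
  set N := ⌊a⌋₊
  have hNa : (N : ℝ) ≤ a := Nat.floor_le (by linarith)
  have haN : a < N + 1 := Nat.lt_floor_add_one a
  have hN : (1 : ℝ) ≤ N := by exact_mod_cast Nat.le_floor (by simpa using ha)
  have hharmonic : (harmonic N : ℝ) = ∑ n ∈ Finset.range N, 1 / ((n : ℝ) + 1) := by
    simp [harmonic]
  have hhead_le : ∑ n ∈ Finset.range N, (1 / ((n : ℝ) + 1) - 1 / √(a ^ 2 + ((n : ℝ) + 1) ^ 2))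
      ≤ 1 + log a := by
    calc _ ≤ ∑ n ∈ Finset.range N, 1 / ((n : ℝ) + 1) :=
          Finset.sum_le_sum fun n _ => sub_le_self _ (by positivity)
      _ ≤ 1 + log N := hharmonic ▸ harmonic_le_one_add_log N
      _ ≤ 1 + log a := by gcongr
  have hhead_ge : log a - 1 ≤
      ∑ n ∈ Finset.range N, (1 / ((n : ℝ) + 1) - 1 / √(a ^ 2 + ((n : ℝ) + 1) ^ 2)) := by
    calc log a - 1 ≤ log (N + 1) - N / a := by
          gcongr
          · rw [div_le_one (by linarith)]; exact hNa
      _ ≤ ∑ n ∈ Finset.range N, (1 / ((n : ℝ) + 1) - 1 / a) := by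
          rw [Finset.sum_sub_distrib, ← hharmonic]
          simpa [div_eq_mul_inv] using log_add_one_le_harmonic N
      _ ≤ _ := Finset.sum_le_sum fun n _ => by
          have : a ≤ √(a ^ 2 + ((n : ℝ) + 1) ^ 2) := le_sqrt_of_sq_le (by nlinarith)
          gcongr
  set g : ℕ → ℝ := fun i => 1 / ((N : ℝ) + i)
  have htail_le : ∀ i : ℕ, 1 / (((N + i : ℕ) : ℝ) + 1) - 1 / √(a ^ 2 + (((N + i : ℕ) : ℝ) + 1) ^ 2)
      ≤ a / 2 * (g i - g (i + 1)) := by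
    intro i
    refine (one_div_sub_one_div_sqrt_le (by positivity)).trans ?_
    simp only [g]
    push_cast
    rw [div_sub_div _ _ (by positivity) (by positivity), ← mul_div_assoc,
      div_le_div_iff₀ (by positivity) (by positivity)]
    have hm : a * (N + i) ≤ (N + i + 1) ^ 2 := by nlinarith
    nlinarith [mul_le_mul_of_nonneg_left hm (show 0 ≤ a * (N + i + 1) by positivity)]
  have htail : ∑ i ∈ Finset.range k, (1 / (((N + i : ℕ) : ℝ) + 1)
      - 1 / √(a ^ 2 + (((N + i : ℕ) : ℝ) + 1) ^ 2)) ∈ Set.Icc 0 1 := by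
    constructor
    · exact Finset.sum_nonneg fun i _ => one_div_sub_one_div_sqrt_nonneg (by positivity)
    · calc _ ≤ ∑ i ∈ Finset.range k, a / 2 * (g i - g (i + 1)) :=
            Finset.sum_le_sum fun i _ => htail_le i
        _ = a / 2 * (g 0 - g k) := by rw [← Finset.mul_sum, Finset.sum_range_sub']
        _ ≤ a / 2 * (1 / N) := by
            gcongr
            simp only [g, CharP.cast_eq_zero, add_zero, one_div, tsub_le_iff_right,
              le_add_iff_nonneg_right, inv_nonneg]
            positivity
        _ ≤ 1 := by rw [← mul_div_assoc, div_le_one (by positivity)]; nlinarith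
  rw [Finset.sum_range_add, abs_le]
  constructor <;> linarith [htail.1, htail.2]

end Harmonic

section FundamentalDomain

variable {M L ρ w : ℝ}

lemma monopole_le_monopole (hM : 0 ≤ M) (hρ : 0 < ρ) {x y : ℝ} (h : |y| ≤ |x|) :
    monopole M ρ x ≤ monopole M ρ y := by
  have hxy : y ^ 2 ≤ x ^ 2 := sq_le_sq.2 h
  unfold monopole
  gcongr

/-- For `w ∈ [0, L]` the image at `w ± (n + 1) L` lies between the lattice points `n L`, `(n + 1) L`
and `(n + 2) L`, so the deviation from the lattice sum telescopes. -/
lemma abs_sum_range_monopole_images_le (hM : 0 ≤ M) (hρ : 0 < ρ) (hL : 0 < L) (hw₀ : 0 ≤ w)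
    (hwL : w ≤ L) (K : ℕ) :
    |∑ n ∈ Finset.range K, (2 * monopole M ρ ((n + 1) * L) - monopole M ρ (w - (n + 1) * L)
      - monopole M ρ (w + (n + 1) * L))| ≤ monopole M ρ 0 := by
  set G : ℕ → ℝ := fun k => monopole M ρ (k * L)
  have hG : ∀ k, 0 ≤ G k := fun k => by simp only [G, monopole]; positivity
  have hmono : ∀ {x : ℝ} {k : ℕ}, (k : ℝ) * L ≤ |x| → monopole M ρ x ≤ G k := fun h =>
    monopole_le_monopole hM hρ ((abs_of_nonneg (by positivity)).trans_le h)
  have hmono' : ∀ {x : ℝ} {k : ℕ}, |x| ≤ (k : ℝ) * L → G k ≤ monopole M ρ x := fun h =>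
    monopole_le_monopole hM hρ (h.trans (le_abs_self _))
  have hbounds : ∀ n : ℕ, G (n + 1) - G n ≤ 2 * monopole M ρ ((n + 1) * L)
      - monopole M ρ (w - (n + 1) * L) - monopole M ρ (w + (n + 1) * L) ∧
      2 * monopole M ρ ((n + 1) * L) - monopole M ρ (w - (n + 1) * L)
      - monopole M ρ (w + (n + 1) * L) ≤ G (n + 1) - G (n + 2) := by
    intro n
    have hG1 : G (n + 1) = monopole M ρ ((n + 1) * L) := by simp [G]
    have h₁ : G (n + 1) ≤ monopole M ρ (w - (n + 1) * L) :=
      hmono' (by push_cast; rw [abs_le]; constructor <;> nlinarith)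
    have h₂ : monopole M ρ (w - (n + 1) * L) ≤ G n :=
      hmono (by rw [abs_sub_comm, abs_of_nonneg (by nlinarith)]; nlinarith)
    have h₃ : G (n + 2) ≤ monopole M ρ (w + (n + 1) * L) :=
      hmono' (by push_cast; rw [abs_of_nonneg (by positivity)]; nlinarith)
    have h₄ : monopole M ρ (w + (n + 1) * L) ≤ G (n + 1) :=
      hmono (by push_cast; rw [abs_of_nonneg (by positivity)]; nlinarith)
    constructor <;> linarith
  have hG0 : G 0 = monopole M ρ 0 := by simp [G]
  rw [abs_le]
  constructor
  · calc -monopole M ρ 0 ≤ -(G 0 - G K) := by linarith [hG K]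
      _ = ∑ n ∈ Finset.range K, (G (n + 1) - G n) := by
          rw [← Finset.sum_range_sub' G K, ← Finset.sum_neg_distrib]; simp
      _ ≤ _ := Finset.sum_le_sum fun n _ => (hbounds n).1
  · calc _ ≤ ∑ n ∈ Finset.range K, (G (n + 1) - G (n + 2)) :=
          Finset.sum_le_sum fun n _ => (hbounds n).2
      _ = G 1 - G (K + 1) := Finset.sum_range_sub' (fun k => G (k + 1)) K
      _ ≤ monopole M ρ 0 := by
          have hG10 : G 1 ≤ G 0 := monopole_le_monopole hM hρ (by simp)
          linarith [hG (K + 1)]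

lemma abs_uSchw_add_monopole_le_of_le_abs (hM : 0 < M) (hL : 0 < L) (hρL : L ≤ ρ) (hρM : 2 * M ≤ ρ)
    {x : ℝ} {n : ℕ} (hx : n * L ≤ |x|) :
    |uSchw M ρ x + monopole M ρ x| ≤ 8 * M ^ 2 / L ^ 2 * (1 / ((n : ℝ) + 1) ^ 2) := by
  have hx2 : (n * L) ^ 2 ≤ x ^ 2 := by rw [← sq_abs x]; gcongr
  have hρ2 : L ^ 2 ≤ ρ ^ 2 := by gcongr
  refine (abs_uSchw_add_monopole_le hM hρM x).trans ?_
  have hρ : 0 < ρ := hL.trans_le hρL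
  rw [← mul_div_assoc, mul_one, div_div,
    div_le_div_iff₀ (add_pos_of_pos_of_nonneg (pow_pos hρ 2) (sq_nonneg x)) (by positivity)]
  nlinarith [mul_pos (mul_pos hM hM) (mul_pos hL hL), sq_nonneg ((n - 1) * L), mul_pos hM hM]

lemma sum_range_abs_uSchw_add_monopole_images_le (hM : 0 < M) (hL : 0 < L) (hρL : L ≤ ρ)
    (hρM : 2 * M ≤ ρ) (hw₀ : 0 ≤ w) (hwL : w ≤ L) (K : ℕ) :
    ∑ n ∈ Finset.range K, (|uSchw M ρ (w - (n + 1) * L) + monopole M ρ (w - (n + 1) * L)|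
      + |uSchw M ρ (w + (n + 1) * L) + monopole M ρ (w + (n + 1) * L)|)
      ≤ 16 * M ^ 2 / L ^ 2 * (π ^ 2 / 6) := by
  calc _ ≤ ∑ n ∈ Finset.range K, 16 * M ^ 2 / L ^ 2 * (1 / ((n : ℝ) + 1) ^ 2) := by
        refine Finset.sum_le_sum fun n _ => ?_
        have hminus := abs_uSchw_add_monopole_le_of_le_abs hM hL hρL hρM (x := w - (n + 1) * L)
          (n := n) (by rw [abs_sub_comm, abs_of_nonneg (by nlinarith)]; nlinarith)
        have hplus := abs_uSchw_add_monopole_le_of_le_abs hM hL hρL hρM (x := w + (n + 1) * L)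
          (n := n) (by rw [abs_of_nonneg (by positivity)]; nlinarith)
        exact (add_le_add hminus hplus).trans_eq (by ring)
    _ = 16 * M ^ 2 / L ^ 2 * ∑ n ∈ Finset.range K, 1 / ((n : ℝ) + 1) ^ 2 := by rw [Finset.mul_sum]
    _ ≤ 16 * M ^ 2 / L ^ 2 * (π ^ 2 / 6) := by
        gcongr
        exact sum_le_hasSum _ (fun n _ => by positivity) hasSum_one_div_add_one_sq

lemma four_mul_div_sub_two_mul_monopole (M : ℝ) (hL : 0 < L) {m : ℝ} (hm : 0 < m) :
    4 * M / (m * L) - 2 * monopole M ρ (m * L)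
      = 4 * M / L * (1 / m - 1 / √((ρ / L) ^ 2 + m ^ 2)) := by
  have hscale : √(ρ ^ 2 + (m * L) ^ 2) = L * √((ρ / L) ^ 2 + m ^ 2) := by
    rw [← sqrt_sq hL.le, ← sqrt_mul (sq_nonneg L), sqrt_sq hL.le]
    congr 1
    field_simp
  rw [monopole, hscale]
  field_simp
  ring

lemma abs_sum_range_periodicSchwTerm_sub_log_le (hM : 0 < M) (hL : 0 < L) (hρL : L ≤ ρ)
    (hρM : 2 * M ≤ ρ) (hw₀ : 0 ≤ w) (hwL : w ≤ L) (k : ℕ) :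
    |∑ n ∈ Finset.range (⌊ρ / L⌋₊ + k), periodicSchwTerm M L ρ w n - 4 * M / L * log (ρ / L)|
      ≤ 4 * M / L * 2 + monopole M ρ 0 + 16 * M ^ 2 / L ^ 2 * (π ^ 2 / 6) := by
  set K := ⌊ρ / L⌋₊ + k
  have hρ : 0 < ρ := hL.trans_le hρL
  have hsplit : ∀ n : ℕ, periodicSchwTerm M L ρ w n
      = 4 * M / L * (1 / ((n : ℝ) + 1) - 1 / √((ρ / L) ^ 2 + ((n : ℝ) + 1) ^ 2))
        + (2 * monopole M ρ ((n + 1) * L) - monopole M ρ (w - (n + 1) * L)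
          - monopole M ρ (w + (n + 1) * L))
        + ((uSchw M ρ (w - (n + 1) * L) + monopole M ρ (w - (n + 1) * L))
          + (uSchw M ρ (w + (n + 1) * L) + monopole M ρ (w + (n + 1) * L))) := by
    intro n
    rw [periodicSchwTerm, ← four_mul_div_sub_two_mul_monopole M hL (by positivity)]
    ring
  have hlattice := abs_sum_range_one_div_sub_one_div_sqrt_sub_log_le
    ((one_le_div hL).2 hρL) k
  have himages := abs_sum_range_monopole_images_le hM.le hρ hL hw₀ hwL K
  have herrors := (Finset.abs_sum_le_sum_abs _ _).trans <| (Finset.sum_le_sum fun n _ =>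
    abs_add_le _ _).trans (sum_range_abs_uSchw_add_monopole_images_le hM hL hρL hρM hw₀ hwL K)
  rw [Finset.sum_congr rfl fun n _ => hsplit n, Finset.sum_add_distrib, Finset.sum_add_distrib,
    ← Finset.mul_sum]
  set S := ∑ n ∈ Finset.range K, (1 / ((n : ℝ) + 1) - 1 / √((ρ / L) ^ 2 + ((n : ℝ) + 1) ^ 2))
  calc _ = |4 * M / L * (S - log (ρ / L)) + (∑ n ∈ Finset.range K, (2 * monopole M ρ ((n + 1) * L)
          - monopole M ρ (w - (n + 1) * L) - monopole M ρ (w + (n + 1) * L)))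
          + ∑ n ∈ Finset.range K, ((uSchw M ρ (w - (n + 1) * L) + monopole M ρ (w - (n + 1) * L))
          + (uSchw M ρ (w + (n + 1) * L) + monopole M ρ (w + (n + 1) * L)))| := by
        congr 1; ring
    _ ≤ 4 * M / L * |S - log (ρ / L)| + monopole M ρ 0 + 16 * M ^ 2 / L ^ 2 * (π ^ 2 / 6) := by
        refine (abs_add_le _ _).trans (add_le_add ((abs_add_le _ _).trans (add_le_add ?_ himages))
          herrors)
        rw [abs_mul, abs_of_pos (by positivity)]
    _ ≤ _ := by gcongr

end FundamentalDomain

section Asymptotics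

variable {M L ρ : ℝ}

lemma abs_tsum_periodicSchwTerm_sub_log_le (hM : 0 < M) (hL : 0 < L) (hρL : L ≤ ρ)
    (hρM : 2 * M ≤ ρ) {w : ℝ} (hw₀ : 0 ≤ w) (hwL : w ≤ L) :
    |∑' n, periodicSchwTerm M L ρ w n - 4 * M / L * log (ρ / L)|
      ≤ 4 * M / L * 2 + monopole M ρ 0 + 16 * M ^ 2 / L ^ 2 * (π ^ 2 / 6) := by
  have hlim := (summable_periodicSchwTerm hM hL hρM w).hasSum.tendsto_sum_nat.comp
    (tendsto_add_atTop_nat ⌊ρ / L⌋₊)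
  refine le_of_tendsto' ((hlim.sub_const _).abs) fun k => ?_
  rw [Function.comp_apply, add_comm]
  exact abs_sum_range_periodicSchwTerm_sub_log_le hM hL hρL hρM hw₀ hwL k

lemma abs_periodicSchw_sub_log_le (hM : 0 < M) (hL : 0 < L) (hρL : L ≤ ρ) (hρM : 2 * M ≤ ρ)
    (w : ℝ) :
    |periodicSchw M L ρ w - 4 * M / L * log ρ|
      ≤ 4 * M / L * (|log L| + 4) + 16 * M ^ 2 / L ^ 2 * (π ^ 2 / 6) := by
  have hρ : 0 < ρ := hL.trans_le hρL
  obtain ⟨w₀, ⟨hw₀, hwL⟩, hw⟩ := (periodic_periodicSchw hM hL hρM).exists_mem_Ico₀ hL w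
  have hseries := abs_tsum_periodicSchwTerm_sub_log_le hM hL hρL hρM hw₀ hwL.le
  have hmonopole : monopole M ρ 0 ≤ 2 * M / L := by
    rw [monopole, zero_pow two_ne_zero, add_zero, sqrt_sq hρ.le]
    gcongr
  have hcenter : |uSchw M ρ w₀| ≤ 2 * monopole M ρ 0 :=
    (abs_uSchw_le hM hρM w₀).trans (by gcongr; exact monopole_le_monopole hM.le hρ (by simp))
  have hlog : |4 * M / L * log L| = 4 * M / L * |log L| := by
    rw [abs_mul, abs_of_pos (by positivity)]
  rw [log_div hρ.ne' hL.ne'] at hseries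
  rw [hw, periodicSchw]
  calc _ = |uSchw M ρ w₀ + (∑' n, periodicSchwTerm M L ρ w₀ n - 4 * M / L * (log ρ - log L))
        - 4 * M / L * log L| := by congr 1; ring
    _ ≤ |uSchw M ρ w₀| + |∑' n, periodicSchwTerm M L ρ w₀ n - 4 * M / L * (log ρ - log L)|
        + |4 * M / L * log L| := (abs_sub _ _).trans (by gcongr; exact abs_add_le _ _)
    _ ≤ _ := by
        rw [hlog, mul_add]
        linarith [show 4 * M / L * 4 = 3 * (2 * M / L) + 4 * M / L * 2 + 2 * M / L by ring,
          show 0 ≤ 2 * M / L by positivity]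

end Asymptotics

/-- the double periodic Schwarzschild potential satisfies
u_PS(ρ,z) = (8M/L) ln ρ + O(1) as ρ → ∞, uniformly in z. -/
theorem double_periodic_schwarzschild_asymptotics
    (M L : ℝ) (hM : 0 < M) (hL : 4 * M < L) :
    ∃ C > 0, ∃ ρ₀ > 0, ∀ ρ ≥ ρ₀, ∀ z : ℝ,
      |uPSdouble M L ρ z - (8 * M / L) * Real.log ρ| ≤ C := by
  have hL₀ : 0 < L := by linarith
  refine ⟨2 * (4 * M / L * (|log L| + 4) + 16 * M ^ 2 / L ^ 2 * (π ^ 2 / 6)), by positivity,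
    L, hL₀, fun ρ hρ z => ?_⟩
  have hbound := abs_periodicSchw_sub_log_le hM hL₀ hρ (by linarith)
  rw [uPSdouble, uPSsigned_eq_periodicSchw, uPSsigned_eq_periodicSchw]
  calc _ = |(periodicSchw M L ρ (z + -1 * L / 4) - 4 * M / L * log ρ)
        + (periodicSchw M L ρ (z + 1 * L / 4) - 4 * M / L * log ρ)| := by congr 1; ring
    _ ≤ _ := (abs_add_le _ _).trans (by linarith [hbound (z + -1 * L / 4), hbound (z + 1 * L / 4)])
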